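/- Let c be a grid cell and let v, v' ∈ P_mid(c). Let w be the predecessor of v' on the shortest s–v' path (so d(v') = d(w) + |wv'|) and let u be the predecessor of w on the shortest s–w path (so d(w) = d(u) + |uw|). If uv' is not an edge of G, then d(u) < d(v). -/

import Mathlib

noncomputable section

/-- Points of the plane. -/
abbrev Pt := EuclideanSpace ℝ (Fin 2)

/-- Membership in the closed axis-parallel square of Euclidean diameter `d`
(side `d/√2`) centered at `p`. -/
def inSq (p : Pt) (d : ℝ) (x : Pt) : Prop :=
  ∀ i, |x i - p i| ≤ d / (2 * Real.sqrt 2)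

/-- Adjacency in the weighted disk graph: distinct points whose disks intersect. -/
def Adj (r : Pt → ℝ) (x y : Pt) : Prop := x ≠ y ∧ dist x y ≤ r x + r y

/-- A (simple) path from `s` to `v` in the weighted disk graph on `P`. -/
def IsPath (P : Set Pt) (r : Pt → ℝ) (s v : Pt) (L : List Pt) : Prop :=
  L.head? = some s ∧ L.getLast? = some v ∧ (∀ x ∈ L, x ∈ P) ∧ L.Nodup ∧ L.Chain' (Adj r)

/-- The length of a path: the sum of the Euclidean lengths of its edges. -/
def pathLen : List Pt → ℝ
  | [] => 0
  | [_] => 0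
  | a :: b :: L => dist a b + pathLen (b :: L)

/-- Shortest-path distance from `s` to `v` in the weighted disk graph on `P`. -/
def spDist (P : Set Pt) (r : Pt → ℝ) (s v : Pt) : ℝ :=
  sInf (pathLen '' {L | IsPath P r s v L})

/-!
Since `u` and `v'` are not adjacent, `|uv'| > r u + r v' ≥ 1 + 8|c|`, so by the triangle
inequality `d(u) = d(v') - |uw| - |wv'| ≤ d(v') - |uv'| < d(v') - 1 - 8|c|`. On the other hand
`v` and `v'` lie in the same cell, so `|vv'| ≤ |c|`, they are adjacent, and
`d(v') ≤ d(v) + |c|`.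
-/

lemma pathLen_nonneg : ∀ L : List Pt, 0 ≤ pathLen L
  | [] => le_rfl
  | [_] => le_rfl
  | _ :: b :: L => add_nonneg dist_nonneg (pathLen_nonneg (b :: L))

lemma pathLen_le_pathLen_append : ∀ L M : List Pt, pathLen L ≤ pathLen (L ++ M)
  | [], M => pathLen_nonneg M
  | [a], M => by simpa [pathLen] using pathLen_nonneg (a :: M)
  | a :: b :: L, M => by simpa [pathLen] using pathLen_le_pathLen_append (b :: L) M

lemma pathLen_append_singleton {x : Pt} (y : Pt) :
    ∀ {L : List Pt}, L.getLast? = some x → pathLen (L ++ [y]) = pathLen L + dist x y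
  | [], h => by simp at h
  | [a], h => by simp_all [pathLen]
  | a :: b :: L, h => by
    simp only [List.cons_append, pathLen] at h ⊢
    rw [← List.cons_append, pathLen_append_singleton y (by simpa using h)]
    ring

section IsPath

variable {P : Set Pt} {r : Pt → ℝ} {s v v' : Pt}

lemma IsPath.truncate {L₁ L₂ : List Pt} (h : IsPath P r s v (L₁ ++ v' :: L₂)) :
    IsPath P r s v' (L₁ ++ [v']) := by
  obtain ⟨hhead, -, hP, hnodup, hchain⟩ := h
  have hsplit : L₁ ++ v' :: L₂ = (L₁ ++ [v']) ++ L₂ := by simp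
  rw [hsplit] at hP hnodup hchain
  refine ⟨?_, List.getLast?_concat, fun x hx => hP x (List.mem_append_left _ hx),
    hnodup.sublist (List.sublist_append_left _ _), (List.isChain_append.mp hchain).1⟩
  simpa [List.head?_append] using hhead

lemma IsPath.append_singleton {L : List Pt} (h : IsPath P r s v L) (hv' : v' ∈ P)
    (hv'L : v' ∉ L) (hadj : Adj r v v') : IsPath P r s v' (L ++ [v']) := by
  obtain ⟨hhead, hlast, hP, hnodup, hchain⟩ := h
  refine ⟨?_, List.getLast?_concat, ?_, ?_, ?_⟩
  · simp [List.head?_append, hhead]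
  · intro x hx
    rcases List.mem_append.mp hx with hx | hx
    exacts [hP x hx, List.eq_of_mem_singleton hx ▸ hv']
  · simpa [List.nodup_append] using ⟨hnodup, fun x hx hxv' => hv'L (hxv' ▸ hx)⟩
  · refine List.isChain_append.mpr ⟨hchain, List.isChain_singleton _, ?_⟩
    rw [hlast]
    simpa using hadj

lemma IsPath.exists_extend {L : List Pt} (h : IsPath P r s v L) (hv' : v' ∈ P)
    (hvv' : dist v v' ≤ r v + r v') :
    ∃ L', IsPath P r s v' L' ∧ pathLen L' ≤ pathLen L + dist v v' := by
  by_cases hv'L : v' ∈ L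
  · obtain ⟨L₁, L₂, rfl⟩ := List.append_of_mem hv'L
    refine ⟨_, h.truncate, ?_⟩
    calc pathLen (L₁ ++ [v']) ≤ pathLen ((L₁ ++ [v']) ++ L₂) :=
          pathLen_le_pathLen_append _ _
      _ = pathLen (L₁ ++ v' :: L₂) := by simp
      _ ≤ _ := le_add_of_nonneg_right dist_nonneg
  · have hvv'_ne : v ≠ v' := by
      rintro rfl
      exact hv'L (List.mem_of_getLast? h.2.1)
    exact ⟨_, h.append_singleton hv' hv'L ⟨hvv'_ne, hvv'⟩,
      (pathLen_append_singleton v' h.2.1).le⟩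

lemma spDist_le_pathLen {L : List Pt} (h : IsPath P r s v L) : spDist P r s v ≤ pathLen L :=
  csInf_le ⟨0, by rintro _ ⟨M, -, rfl⟩; exact pathLen_nonneg M⟩ ⟨L, h, rfl⟩

lemma spDist_le_spDist_add_dist (hv : ∃ L, IsPath P r s v L) (hv' : v' ∈ P)
    (hvv' : dist v v' ≤ r v + r v') : spDist P r s v' ≤ spDist P r s v + dist v v' := by
  obtain ⟨L₀, hL₀⟩ := hv
  rw [← sub_le_iff_le_add]
  refine le_csInf ⟨_, L₀, hL₀, rfl⟩ ?_
  rintro _ ⟨L, hL, rfl⟩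
  obtain ⟨L', hL', hlen⟩ := hL.exists_extend hv' hvv'
  linarith [spDist_le_pathLen hL']

end IsPath

lemma inSq.nonneg {p x : Pt} {d : ℝ} (hx : inSq p d x) : 0 ≤ d := by
  by_contra! hd
  have : d / (2 * Real.sqrt 2) < 0 := div_neg_of_neg_of_pos hd (by positivity)
  linarith [abs_nonneg (x 0 - p 0), hx 0]

lemma inSq.dist_le {p x y : Pt} {d : ℝ} (hx : inSq p d x) (hy : inSq p d y) : dist x y ≤ d := by
  have hsqrt : Real.sqrt 2 ^ 2 = 2 := Real.sq_sqrt zero_le_two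
  have hcoord : ∀ i, dist (x i) (y i) ^ 2 ≤ d ^ 2 / 2 := fun i => by
    have : |x i - y i| ≤ d / Real.sqrt 2 := by
      calc |x i - y i| ≤ |x i - p i| + |y i - p i| :=
            (abs_sub_le _ (p i) _).trans_eq (by rw [abs_sub_comm (p i)])
        _ ≤ d / (2 * Real.sqrt 2) + d / (2 * Real.sqrt 2) := add_le_add (hx i) (hy i)
        _ = d / Real.sqrt 2 := by field_simp; ring
    rw [Real.dist_eq]
    calc |x i - y i| ^ 2 ≤ (d / Real.sqrt 2) ^ 2 := pow_le_pow_left₀ (abs_nonneg _) this 2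
      _ = d ^ 2 / 2 := by rw [div_pow, hsqrt]
  rw [EuclideanSpace.dist_eq, Real.sqrt_le_left hx.nonneg]
  calc ∑ i, dist (x i) (y i) ^ 2 ≤ ∑ _i : Fin 2, d ^ 2 / 2 :=
        Finset.sum_le_sum fun i _ => hcoord i
    _ = d ^ 2 := by simp; ring

theorem grandparent_processed_general
    (P : Set Pt) (r : Pt → ℝ) (hr : ∀ p ∈ P, 1 ≤ r p)
    (s : Pt)
    (pc : Pt) (dc : ℝ)
    (v v' w u : Pt) (hv' : v' ∈ P) (hu : u ∈ P)
    (hvc : inSq pc dc v) (hvr : 8 * dc ≤ r v)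
    (hv'c : inSq pc dc v') (hv'r : 8 * dc ≤ r v')
    (hconnv : ∃ L, IsPath P r s v L)
    (hdv' : spDist P r s v' = spDist P r s w + dist w v')
    (huw : Adj r u w)
    (hdw : spDist P r s w = spDist P r s u + dist u w)
    (hnon : ¬ Adj r u v') :
    spDist P r s u < spDist P r s v := by
  have hdc : 0 ≤ dc := hvc.nonneg
  have hvv' : dist v v' ≤ dc := hvc.dist_le hv'c
  have hdv'_le : spDist P r s v' ≤ spDist P r s v + dist v v' :=
    spDist_le_spDist_add_dist hconnv hv' (by linarith)
  have hu_ne_v' : u ≠ v' := by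
    rintro rfl
    have hloop : dist u w + dist w u = 0 := by linarith
    exact huw.1 (dist_eq_zero.mp (by linarith [dist_comm u w, dist_nonneg (x := u) (y := w)]))
  have hfar : r u + r v' < dist u v' := not_le.mp fun h => hnon ⟨hu_ne_v', h⟩
  linarith [hr u hu, dist_triangle u w v']

/-- Let `c` be a grid cell (an axis-parallel square of diameter `dc`
centered at `pc`) and let `v, v' ∈ P_mid(c)`. Let `w` be the predecessor of `v'` on the
shortest `s`–`v'` path (so `w v'` is an edge and `d(v') = d(w) + |wv'|`) and let `u` be
the predecessor of `w` on the shortest `s`–`w` path. If `uv'` is not an edge of `G`,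
then `d(u) < d(v)`. -/
theorem grandparent_processed
    (P : Set Pt) (r : Pt → ℝ) (hr : ∀ p ∈ P, 1 ≤ r p)
    (s : Pt) (hs : s ∈ P)
    (pc : Pt) (dc : ℝ) (hdc : 0 < dc)
    (v v' w u : Pt) (hv : v ∈ P) (hv' : v' ∈ P) (hw : w ∈ P) (hu : u ∈ P)
    (hvc : inSq pc dc v) (hvr : 8 * dc ≤ r v) (hvr' : r v < 16 * dc)
    (hv'c : inSq pc dc v') (hv'r : 8 * dc ≤ r v') (hv'r' : r v' < 16 * dc)
    (hconnv : ∃ L, IsPath P r s v L) (hconnv' : ∃ L, IsPath P r s v' L)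
    (hconnw : ∃ L, IsPath P r s w L) (hconnu : ∃ L, IsPath P r s u L)
    (hwv' : Adj r w v')
    (hdv' : spDist P r s v' = spDist P r s w + dist w v')
    (huw : Adj r u w)
    (hdw : spDist P r s w = spDist P r s u + dist u w)
    (hnon : ¬ Adj r u v') :
    spDist P r s u < spDist P r s v :=
  grandparent_processed_general P r hr s pc dc v v' w u hv' hu hvc hvr hv'c hv'r hconnv hdv' huw hdw
    hnon
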